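/- If α ∈ [0,1] is not an m-Farey number, then there exists r ∈ F_m such that the open Farey ball B_F(α, 1/m) equals the open interval (r, r^*). -/
import Mathlib


/-- The set of `m`-Farey numbers viewed inside `ℝ`: rationals in `[0,1]` with
(reduced) denominator at most `m`. -/
def FareyRe (m : ℕ) : Set ℝ :=
  {x | ∃ q : ℚ, (q : ℝ) = x ∧ 0 ≤ q ∧ q ≤ 1 ∧ q.den ≤ m}

lemma farey_finite (m : ℕ) : (FareyRe m).Finite := by
  apply Set.Finite.subset (Set.Finite.image (fun q : ℚ => (q : ℝ))
    (((Finset.range (m+1)) ×ˢ (Finset.range (m+1))).finite_toSet.image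
      (fun p => (p.1 : ℚ)/p.2)))
  rintro x ⟨q, rfl, hq0, hq1, hqd⟩
  refine ⟨q, ⟨(q.num.toNat, q.den), ?_, ?_⟩, rfl⟩
  · simp only [Finset.coe_product, Set.mem_prod, Finset.mem_coe, Finset.mem_range]
    constructor
    · have hden : (0:ℚ) < (q.den:ℚ) := by positivity
      have hnum : (q.num : ℚ) = q * q.den :=
        (div_eq_iff (ne_of_gt hden)).mp (Rat.num_div_den q)
      have h1 : (q.num : ℚ) ≤ (q.den : ℚ) := by nlinarith
      have h2 : q.num ≤ (q.den : ℤ) := by exact_mod_cast h1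
      omega
    · omega
  · have hn : (0:ℤ) ≤ q.num := Rat.num_nonneg.mpr hq0
    simp only
    rw [show ((q.num.toNat : ℚ)) = (q.num : ℚ) by exact_mod_cast congrArg Int.cast (Int.toNat_of_nonneg hn)]
    exact Rat.num_div_den q

lemma farey_zero_mem {m : ℕ} (hm : 1 ≤ m) : (0:ℝ) ∈ FareyRe m :=
  ⟨0, by norm_num, le_refl 0, by norm_num, by simpa using hm⟩

lemma farey_one_mem {m : ℕ} (hm : 1 ≤ m) : (1:ℝ) ∈ FareyRe m :=
  ⟨1, by norm_num, by norm_num, le_refl 1, by simpa using hm⟩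

lemma farey_subset {m m' : ℕ} (h : m ≤ m') : FareyRe m ⊆ FareyRe m' := by
  rintro x ⟨q, rfl, h0, h1, hd⟩; exact ⟨q, rfl, h0, h1, hd.trans h⟩

lemma farey_mem_Icc {m : ℕ} {x : ℝ} (hx : x ∈ FareyRe m) : x ∈ Set.Icc (0:ℝ) 1 := by
  obtain ⟨q, rfl, h0, h1, -⟩ := hx
  exact ⟨by exact_mod_cast h0, by exact_mod_cast h1⟩


/-- `s = r^*` is the upper Farey neighbor of `r` in `F_m`: the smallest element of
`F_m` strictly above `r`. -/
def IsUpperNbr (m : ℕ) (r s : ℝ) : Prop :=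
  IsLeast {t | t ∈ FareyRe m ∧ r < t} s

lemma upperNbr_one : IsUpperNbr 1 0 1 := by
  constructor
  · exact ⟨farey_one_mem le_rfl, one_pos⟩
  · rintro t ⟨⟨q, rfl, h0, h1, hd⟩, ht⟩
    have hd1 : q.den = 1 := le_antisymm hd q.pos
    have : ∃ n : ℤ, q = n := ⟨q.num, by rw [← Rat.num_div_den q, hd1]; simp⟩
    obtain ⟨n, rfl⟩ := this
    have hn : 0 < n := by exact_mod_cast (show (0:ℚ) < n by exact_mod_cast ht)
    have : (1:ℤ) ≤ n := hn
    exact_mod_cast (show (1:ℚ) ≤ n by exact_mod_cast this)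

/-- The Farey metric on `[0,1]`. -/
noncomputable def dF (α β : ℝ) : ℝ :=
  if α = β then 0
  else if α = 0 ∨ α = 1 ∨ β = 0 ∨ β = 1 then 1
  else sInf {d : ℝ | ∃ m : ℕ, 1 ≤ m ∧ d = 1 / (m + 1) ∧
    ∃ r s : ℝ, r ∈ FareyRe m ∧ IsUpperNbr m r s ∧
      α ∈ Set.Ioo r s ∧ β ∈ Set.Ioo r s}

theorem stmt_9 (m : ℕ) (hm : 1 ≤ m) (α : ℝ) (hα : α ∈ Set.Icc (0 : ℝ) 1)
    (h : α ∉ FareyRe m) :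
    ∃ r s : ℝ, r ∈ FareyRe m ∧ IsUpperNbr m r s ∧
      {β ∈ Set.Icc (0 : ℝ) 1 | dF α β < 1 / (m : ℝ)} = Set.Ioo r s := by
  have hmR : (0:ℝ) < m := by exact_mod_cast Nat.pos_of_ne_zero (by omega)
  have hα0 : α ≠ 0 := fun e => h (e ▸ farey_zero_mem hm)
  have hα1 : α ≠ 1 := fun e => h (e ▸ farey_one_mem hm)
  have hα0' : 0 < α := lt_of_le_of_ne hα.1 (Ne.symm hα0)
  have hα1' : α < 1 := lt_of_le_of_ne hα.2 hα1
  -- the sets below and above α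
  set A : Set ℝ := {t ∈ FareyRe m | t < α} with hAdef
  set B : Set ℝ := {t ∈ FareyRe m | α < t} with hBdef
  have hAfin : A.Finite := (farey_finite m).subset (fun t ht => ht.1)
  have hBfin : B.Finite := (farey_finite m).subset (fun t ht => ht.1)
  have hAne : A.Nonempty := ⟨0, farey_zero_mem hm, hα0'⟩
  have hBne : B.Nonempty := ⟨1, farey_one_mem hm, hα1'⟩
  set r : ℝ := sSup A with hrdef
  set s : ℝ := sInf B with hsdef
  have hrA : r ∈ A := hAne.csSup_mem hAfin
  have hsB : s ∈ B := hBne.csInf_mem hBfin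
  have hrub : ∀ t ∈ A, t ≤ r := fun t ht => le_csSup hAfin.bddAbove ht
  have hslb : ∀ t ∈ B, s ≤ t := fun t ht => csInf_le hBfin.bddBelow ht
  have hrα : r < α := hrA.2
  have hαs : α < s := hsB.2
  have hrF : r ∈ FareyRe m := hrA.1
  have hsF : s ∈ FareyRe m := hsB.1
  have hr0 : 0 ≤ r := (farey_mem_Icc hrF).1
  have hs1 : s ≤ 1 := (farey_mem_Icc hsF).2
  have hUN : IsUpperNbr m r s := by
    constructor
    · exact ⟨hsF, hrα.trans hαs⟩
    · rintro t ⟨htF, hrt⟩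
      rcases lt_trichotomy t α with hlt | heq | hgt
      · exact absurd (hrub t ⟨htF, hlt⟩) (not_le.mpr hrt)
      · exact absurd (heq ▸ htF) h
      · exact hslb t ⟨htF, hgt⟩
  refine ⟨r, s, hrF, hUN, ?_⟩
  ext β
  have hbdd : BddBelow {d : ℝ | ∃ m' : ℕ, 1 ≤ m' ∧ d = 1 / (m' + 1) ∧
      ∃ r' s' : ℝ, r' ∈ FareyRe m' ∧ IsUpperNbr m' r' s' ∧
        α ∈ Set.Ioo r' s' ∧ β ∈ Set.Ioo r' s'} := by
    refine ⟨0, ?_⟩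
    rintro x ⟨m', -, rfl, -⟩
    positivity
  simp only [Set.mem_setOf_eq, Set.mem_Ioo, Set.mem_Icc]
  constructor
  · rintro ⟨⟨hβ0, hβ1⟩, hd⟩
    by_cases hβα : β = α
    · exact hβα ▸ ⟨hrα, hαs⟩
    have hβα' : α ≠ β := fun e => hβα e.symm
    have hβ0' : β ≠ 0 := by
      rintro rfl
      rw [dF, if_neg hβα', if_pos (by tauto)] at hd
      have : (1:ℝ)/m ≤ 1 := by
        rw [div_le_one hmR]; exact_mod_cast hm
      linarith
    have hβ1' : β ≠ 1 := by
      rintro rfl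
      rw [dF, if_neg hβα', if_pos (by tauto)] at hd
      have : (1:ℝ)/m ≤ 1 := by
        rw [div_le_one hmR]; exact_mod_cast hm
      linarith
    rw [dF, if_neg hβα', if_neg (by tauto)] at hd
    have hne : Set.Nonempty {d : ℝ | ∃ m' : ℕ, 1 ≤ m' ∧ d = 1 / (m' + 1) ∧
        ∃ r' s' : ℝ, r' ∈ FareyRe m' ∧ IsUpperNbr m' r' s' ∧
          α ∈ Set.Ioo r' s' ∧ β ∈ Set.Ioo r' s'} := by
      refine ⟨1/2, 1, le_rfl, by norm_num, 0, 1, farey_zero_mem le_rfl, upperNbr_one,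
        ⟨hα0', hα1'⟩, ⟨lt_of_le_of_ne hβ0 (Ne.symm hβ0'), lt_of_le_of_ne hβ1 hβ1'⟩⟩
    obtain ⟨x, hxS, hx⟩ := exists_lt_of_csInf_lt hne hd
    obtain ⟨m', hm', rfl, r', s', hr'F, hs'UN, hαm, hβm⟩ := hxS
    have hmm' : m ≤ m' := by
      have h1 : (m:ℝ) < (m':ℝ) + 1 := by
        rw [div_lt_div_iff₀ (by positivity) hmR] at hx
        linarith
      exact_mod_cast Nat.lt_succ_iff.mp (by exact_mod_cast h1)
    have hrr' : r ≤ r' := by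
      by_contra hlt
      push_neg at hlt
      have := hs'UN.2 ⟨farey_subset hmm' hrF, hlt⟩
      linarith [hαm.2]
    have hs's : s' ≤ s :=
      hs'UN.2 ⟨farey_subset hmm' hsF, hαm.1.trans hαs⟩
    exact ⟨lt_of_le_of_lt hrr' hβm.1, lt_of_lt_of_le hβm.2 hs's⟩
  · rintro ⟨hrβ, hβs⟩
    have hβ0 : 0 < β := lt_of_le_of_lt hr0 hrβ
    have hβ1 : β < 1 := lt_of_lt_of_le hβs hs1
    refine ⟨⟨hβ0.le, hβ1.le⟩, ?_⟩
    by_cases hβα : α = β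
    · rw [dF, if_pos hβα]; positivity
    rw [dF, if_neg hβα, if_neg (by push_neg; exact ⟨hα0, hα1, ne_of_gt hβ0, ne_of_lt hβ1⟩)]
    have hmem : (1:ℝ)/(m+1) ∈ {d : ℝ | ∃ m' : ℕ, 1 ≤ m' ∧ d = 1 / (m' + 1) ∧
        ∃ r' s' : ℝ, r' ∈ FareyRe m' ∧ IsUpperNbr m' r' s' ∧
          α ∈ Set.Ioo r' s' ∧ β ∈ Set.Ioo r' s'} :=
      ⟨m, hm, rfl, r, s, hrF, hUN, ⟨hrα, hαs⟩, ⟨hrβ, hβs⟩⟩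
    calc sInf _ ≤ (1:ℝ)/(m+1) := csInf_le hbdd hmem
      _ < 1/m := by
        rw [div_lt_div_iff₀ (by positivity) hmR]; linarith
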